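/- arXiv:1702.05469 — 5 statements merged into one kernel-verified Lean document; each statement's English description precedes it below -/
import Mathlib

section
/- Let n ≥ 1 be a natural number, E a finite-dimensional real normed vector space, H : ℝ → ℝ a differentiable function, and T, N, y : ℝ → E differentiable functions satisfying, for all s: T'(s) = −(n H(s)/2)·N(s) − y(s), N'(s) = (n H(s)/2)·T(s), and y'(s) = T(s). Define κ(s) = √(1 + n²H(s)²/4), τ(s) = 2 n H'(s)/(4 + n²H(s)²), 𝐧(s) = −(n H(s)/√(4 + n²H(s)²))·N(s) − (2/√(4 + n²H(s)²))·y(s), and 𝐛(s) = −(2/√(4 + n²H(s)²))·N(s) + (n H(s)/√(4 + n²H(s)²))·y(s). Then for all s: T'(s) = κ(s)·𝐧(s), 𝐧'(s) = −κ(s)·T(s) + τ(s)·𝐛(s), and 𝐛'(s) = −τ(s)·𝐧(s). -/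
/-!
Writing `a = nH/2` and `θ = arctan a`, one has `sin θ = nH/√(4 + n²H²)` and
`cos θ = 2/√(4 + n²H²)`, so the normal and binormal are the frame `(N, y)` turned by the angle `θ`:
`𝐧 = -(sin θ • N + cos θ • y)` and `𝐛 = -(cos θ • N - sin θ • y)`. Differentiating a rotated
frame produces the angular speed `θ' = a'/(1 + a²)`, which is the torsion, while the structure
equations `N' = a T`, `y' = T` contribute `(a sin θ + cos θ) T = √(1 + a²) T = κ T` to `𝐧'` and
`(a cos θ - sin θ) T = 0` to `𝐛'`.
-/

open Real

noncomputable section Frenet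

variable {E : Type*} [NormedAddCommGroup E] [NormedSpace ℝ E]

def frenetNormal (θ : ℝ) (N y : E) : E := -(sin θ • N + cos θ • y)

def frenetBinormal (θ : ℝ) (N y : E) : E := -(cos θ • N - sin θ • y)

variable {θ : ℝ → ℝ} {N y : ℝ → E} {τ s : ℝ} {N' y' : E}

theorem hasDerivAt_frenetNormal (hθ : HasDerivAt θ τ s) (hN : HasDerivAt N N' s)
    (hy : HasDerivAt y y' s) :
    HasDerivAt (fun t => frenetNormal (θ t) (N t) (y t))
      (-(sin (θ s) • N' + cos (θ s) • y') + τ • frenetBinormal (θ s) (N s) (y s)) s := by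
  refine ((hθ.sin.smul hN).add (hθ.cos.smul hy)).neg.congr_deriv ?_
  rw [frenetBinormal]
  module

theorem hasDerivAt_frenetBinormal (hθ : HasDerivAt θ τ s) (hN : HasDerivAt N N' s)
    (hy : HasDerivAt y y' s) :
    HasDerivAt (fun t => frenetBinormal (θ t) (N t) (y t))
      (-(cos (θ s) • N' - sin (θ s) • y') - τ • frenetNormal (θ s) (N s) (y s)) s := by
  refine ((hθ.cos.smul hN).sub (hθ.sin.smul hy)).neg.congr_deriv ?_
  rw [frenetNormal]
  module

theorem sqrt_one_add_sq_smul_frenetNormal_arctan (a : ℝ) (N y : E) :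
    √(1 + a ^ 2) • frenetNormal (arctan a) N y = -a • N - y := by
  have hpos : 0 < √(1 + a ^ 2) := sqrt_pos.mpr (by positivity)
  simp only [frenetNormal, sin_arctan, cos_arctan, smul_neg, smul_add, smul_smul]
  rw [mul_div_cancel₀ _ hpos.ne', mul_one_div_cancel hpos.ne', one_smul]
  module

theorem sin_arctan_mul_add_cos_arctan (a : ℝ) :
    sin (arctan a) * a + cos (arctan a) = √(1 + a ^ 2) := by
  rw [sin_arctan, cos_arctan]
  field_simp
  rw [sq_sqrt (by positivity)]
  ring

theorem cos_arctan_mul (a : ℝ) : cos (arctan a) * a = sin (arctan a) := by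
  rw [sin_arctan, cos_arctan]
  ring

theorem sqrt_four_add_sq (x : ℝ) : √(4 + x ^ 2) = 2 * √(1 + (x / 2) ^ 2) := by
  rw [show 4 + x ^ 2 = 2 ^ 2 * (1 + (x / 2) ^ 2) by ring, sqrt_mul (by positivity),
    sqrt_sq zero_le_two]

theorem sin_arctan_half (x : ℝ) : sin (arctan (x / 2)) = x / √(4 + x ^ 2) := by
  rw [sin_arctan, sqrt_four_add_sq, div_div]

theorem cos_arctan_half (x : ℝ) : cos (arctan (x / 2)) = 2 / √(4 + x ^ 2) := by
  rw [cos_arctan, sqrt_four_add_sq, div_mul_cancel_left₀ two_ne_zero, one_div]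

variable {a : ℝ → ℝ} {a' : ℝ} {T : ℝ → E}

theorem hasDerivAt_frenetNormal_arctan (ha : HasDerivAt a a' s)
    (hN : HasDerivAt N (a s • T s) s) (hy : HasDerivAt y (T s) s) :
    HasDerivAt (fun t => frenetNormal (arctan (a t)) (N t) (y t))
      (-√(1 + a s ^ 2) • T s + (a' / (1 + a s ^ 2)) • frenetBinormal (arctan (a s)) (N s) (y s))
      s := by
  refine (hasDerivAt_frenetNormal ha.arctan hN hy).congr_deriv ?_
  rw [← sin_arctan_mul_add_cos_arctan, one_div_mul_eq_div]
  module

theorem hasDerivAt_frenetBinormal_arctan (ha : HasDerivAt a a' s)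
    (hN : HasDerivAt N (a s • T s) s) (hy : HasDerivAt y (T s) s) :
    HasDerivAt (fun t => frenetBinormal (arctan (a t)) (N t) (y t))
      (-(a' / (1 + a s ^ 2)) • frenetNormal (arctan (a s)) (N s) (y s)) s := by
  refine (hasDerivAt_frenetBinormal ha.arctan hN hy).congr_deriv ?_
  rw [smul_smul, cos_arctan_mul, sub_self, neg_zero, zero_sub, one_div_mul_eq_div, neg_smul]

end Frenet

theorem stmt_2_general (n : ℕ) (E : Type*) [NormedAddCommGroup E]
    [NormedSpace ℝ E]
    (H : ℝ → ℝ) (hH : Differentiable ℝ H)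
    (T N y : ℝ → E) (hN : Differentiable ℝ N)
    (hy : Differentiable ℝ y)
    (hT' : ∀ s : ℝ, deriv T s = (-((n : ℝ) * H s / 2)) • N s - y s)
    (hN' : ∀ s : ℝ, deriv N s = ((n : ℝ) * H s / 2) • T s)
    (hy' : ∀ s : ℝ, deriv y s = T s)
    (κ τ : ℝ → ℝ) (Fn Fb : ℝ → E)
    (hκ : ∀ s : ℝ, κ s = Real.sqrt (1 + (n : ℝ) ^ 2 * H s ^ 2 / 4))
    (hτ : ∀ s : ℝ, τ s = 2 * (n : ℝ) * deriv H s / (4 + (n : ℝ) ^ 2 * H s ^ 2))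
    (hFn : ∀ s : ℝ, Fn s =
      (-((n : ℝ) * H s / Real.sqrt (4 + (n : ℝ) ^ 2 * H s ^ 2))) • N s
        - (2 / Real.sqrt (4 + (n : ℝ) ^ 2 * H s ^ 2)) • y s)
    (hFb : ∀ s : ℝ, Fb s =
      (-(2 / Real.sqrt (4 + (n : ℝ) ^ 2 * H s ^ 2))) • N s
        + ((n : ℝ) * H s / Real.sqrt (4 + (n : ℝ) ^ 2 * H s ^ 2)) • y s) :
    ∀ s : ℝ, deriv T s = κ s • Fn s ∧
      deriv Fn s = (-(κ s)) • T s + τ s • Fb s ∧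
      deriv Fb s = (-(τ s)) • Fn s := by
  intro s
  set a : ℝ → ℝ := fun t => (n : ℝ) * H t / 2
  simp only [← mul_pow] at hκ hτ hFn hFb
  have ha : HasDerivAt a ((n : ℝ) * deriv H s / 2) s :=
    ((hH s).hasDerivAt.const_mul _).div_const 2
  have hκa : κ s = √(1 + a s ^ 2) := by rw [hκ]; congr 1; simp only [a]; ring
  have hτa : τ s = (n : ℝ) * deriv H s / 2 / (1 + a s ^ 2) := by
    rw [hτ]; field_simp; ring
  have hFn_eq : Fn = fun t => frenetNormal (arctan (a t)) (N t) (y t) := by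
    ext t; rw [hFn, frenetNormal, sin_arctan_half, cos_arctan_half]; module
  have hFb_eq : Fb = fun t => frenetBinormal (arctan (a t)) (N t) (y t) := by
    ext t; rw [hFb, frenetBinormal, sin_arctan_half, cos_arctan_half]; module
  have hNa : HasDerivAt N (a s • T s) s := hN' s ▸ (hN s).hasDerivAt
  have hya : HasDerivAt y (T s) s := hy' s ▸ (hy s).hasDerivAt
  refine ⟨?_, ?_, ?_⟩
  · rw [hT', hκa, hFn_eq, sqrt_one_add_sq_smul_frenetNormal_arctan]
  · rw [hFn_eq, (hasDerivAt_frenetNormal_arctan ha hNa hya).deriv, hκa, hτa, hFb_eq]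
  · rw [hFn_eq, hFb_eq, (hasDerivAt_frenetBinormal_arctan ha hNa hya).deriv, hτa]

/-- Frenet–Serret computation for an integral curve of `e₁ = ∇H/|∇H|` on a
biconservative hypersurface of the sphere `Sⁿ⁺¹`. -/
theorem stmt_2 (n : ℕ) (hn : 1 ≤ n) (E : Type*) [NormedAddCommGroup E]
    [NormedSpace ℝ E] [FiniteDimensional ℝ E]
    (H : ℝ → ℝ) (hH : Differentiable ℝ H)
    (T N y : ℝ → E) (hT : Differentiable ℝ T) (hN : Differentiable ℝ N)
    (hy : Differentiable ℝ y)
    (hT' : ∀ s : ℝ, deriv T s = (-((n : ℝ) * H s / 2)) • N s - y s)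
    (hN' : ∀ s : ℝ, deriv N s = ((n : ℝ) * H s / 2) • T s)
    (hy' : ∀ s : ℝ, deriv y s = T s)
    (κ τ : ℝ → ℝ) (Fn Fb : ℝ → E)
    (hκ : ∀ s : ℝ, κ s = Real.sqrt (1 + (n : ℝ) ^ 2 * H s ^ 2 / 4))
    (hτ : ∀ s : ℝ, τ s = 2 * (n : ℝ) * deriv H s / (4 + (n : ℝ) ^ 2 * H s ^ 2))
    (hFn : ∀ s : ℝ, Fn s =
      (-((n : ℝ) * H s / Real.sqrt (4 + (n : ℝ) ^ 2 * H s ^ 2))) • N s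
        - (2 / Real.sqrt (4 + (n : ℝ) ^ 2 * H s ^ 2)) • y s)
    (hFb : ∀ s : ℝ, Fb s =
      (-(2 / Real.sqrt (4 + (n : ℝ) ^ 2 * H s ^ 2))) • N s
        + ((n : ℝ) * H s / Real.sqrt (4 + (n : ℝ) ^ 2 * H s ^ 2)) • y s) :
    ∀ s : ℝ, deriv T s = κ s • Fn s ∧
      deriv Fn s = (-(κ s)) • T s + τ s • Fb s ∧
      deriv Fb s = (-(τ s)) • Fn s :=
  stmt_2_general n E H hH T N y hN hy hT' hN' hy' κ τ Fn Fb hκ hτ hFn hFb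
end

section
/- Let n ≥ 1 be a natural number, E a finite-dimensional real normed vector space, H : ℝ → ℝ a continuous function, and T, N, y : ℝ → E differentiable functions satisfying, for all s: T'(s) = −(n H(s)/2)·N(s) − y(s), N'(s) = (n H(s)/2)·T(s), and y'(s) = T(s). Then for every s ∈ ℝ, the vectors T(s), N(s) and y(s) all lie in the linear span of {T(0), N(0), y(0)}. -/
/-!
Project `(T, N, y)` to `E ⧸ span {T 0, N 0, y 0}`, a normed space since a finite-dimensional
subspace is closed. The projected triple solves the same linear system, whose coefficients depend
continuously on `s`, and vanishes at `s = 0`; by uniqueness for linear ODEs it vanishes identically.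
-/

open Set

section LinearODE

variable {F : Type*} [NormedAddCommGroup F] [NormedSpace ℝ F]

theorem eq_zero_of_linear_ODE {A : ℝ → F →L[ℝ] F} (hA : Continuous A) {f : ℝ → F}
    (hf : ∀ t, HasDerivAt f (A t (f t)) t) {t₀ : ℝ} (hf₀ : f t₀ = 0) : f = 0 := by
  ext t
  obtain ⟨a, b, ht, ht₀⟩ : ∃ a b, t ∈ Ioo a b ∧ t₀ ∈ Ioo a b :=
    ⟨min t t₀ - 1, max t t₀ + 1, by grind, by grind⟩
  obtain ⟨K, hK⟩ := isCompact_Icc.exists_bound_of_continuousOn (hA.continuousOn (s := Icc a b))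
  have hLip : ∀ s ∈ Ioo a b, LipschitzOnWith K.toNNReal (A s) univ := fun s hs ↦
    have hAs : ‖A s‖₊ ≤ K.toNNReal :=
      NNReal.le_toNNReal_of_coe_le (hK s (Ioo_subset_Icc_self hs))
    ((A s).lipschitz.weaken hAs).lipschitzOnWith
  exact ODE_solution_unique_of_mem_Ioo hLip ht₀ (fun s _ ↦ ⟨hf s, mem_univ _⟩)
    (fun s _ ↦ ⟨by simp, mem_univ _⟩) hf₀ ht

end LinearODE

section FrameSystem

variable (V : Type*) [NormedAddCommGroup V] [NormedSpace ℝ V]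

open ContinuousLinearMap in
/-- `(T, N, y) ↦ (-c N - y, c T, T)`, split as `c • J + K` to make continuity in `c` evident. -/
noncomputable def frameSystem (c : ℝ) : V × V × V →L[ℝ] V × V × V :=
  c • (-(fst ℝ V V).comp (snd ℝ V (V × V))).prod ((fst ℝ V (V × V)).prod 0) +
    (-(snd ℝ V V).comp (snd ℝ V (V × V))).prod ((0 : _ →L[ℝ] V).prod (fst ℝ V (V × V)))

variable {V}

@[simp]
theorem frameSystem_apply (c : ℝ) (p : V × V × V) :
    frameSystem V c p = (-c • p.2.1 - p.2.2, c • p.1, p.1) := by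
  simp [frameSystem, sub_eq_add_neg]

theorem continuous_frameSystem : Continuous (frameSystem V) := by
  unfold frameSystem
  fun_prop

end FrameSystem

theorem stmt_3_general (n : ℕ) (E : Type*) [NormedAddCommGroup E]
    [NormedSpace ℝ E]
    (H : ℝ → ℝ) (hH : Continuous H)
    (T N y : ℝ → E) (hT : Differentiable ℝ T) (hN : Differentiable ℝ N)
    (hy : Differentiable ℝ y)
    (hT' : ∀ s : ℝ, deriv T s = (-((n : ℝ) * H s / 2)) • N s - y s)
    (hN' : ∀ s : ℝ, deriv N s = ((n : ℝ) * H s / 2) • T s)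
    (hy' : ∀ s : ℝ, deriv y s = T s) :
    ∀ s : ℝ,
      T s ∈ Submodule.span ℝ ({T 0, N 0, y 0} : Set E) ∧
      N s ∈ Submodule.span ℝ ({T 0, N 0, y 0} : Set E) ∧
      y s ∈ Submodule.span ℝ ({T 0, N 0, y 0} : Set E) := by
  set S := Submodule.span ℝ ({T 0, N 0, y 0} : Set E)
  have : FiniteDimensional ℝ S := FiniteDimensional.span_of_finite ℝ (toFinite _)
  have : IsClosed (S : Set E) := S.closed_of_finiteDimensional
  let π := S.mkQL
  let f : ℝ → (E ⧸ S) × (E ⧸ S) × (E ⧸ S) := fun t ↦ (π (T t), π (N t), π (y t))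
  have hf : ∀ t, HasDerivAt f (frameSystem _ (n * H t / 2) (f t)) t := fun t ↦ by
    have hπ {g : ℝ → E} (hg : Differentiable ℝ g) :
        HasDerivAt (fun u ↦ π (g u)) (π (deriv g t)) t :=
      π.hasFDerivAt.comp_hasDerivAt t (hg t).hasDerivAt
    convert (hπ hT).prodMk ((hπ hN).prodMk (hπ hy)) using 1
    simp [f, hT', hN', hy', map_sub, map_smul]
  have hf₀ : f 0 = 0 := by
    simp only [f, π, Submodule.coe_mkQL, Submodule.mkQ_apply, Submodule.Quotient.mk_eq_zero,
      Prod.mk_eq_zero]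
    refine ⟨?_, ?_, ?_⟩ <;> exact Submodule.subset_span (by simp)
  have hf_eq := eq_zero_of_linear_ODE (continuous_frameSystem.comp (by fun_prop)) hf hf₀
  intro s
  simpa [f, π, Submodule.Quotient.mk_eq_zero] using congrFun hf_eq s

/-- An integral curve of `e₁` on a biconservative hypersurface of `Sⁿ⁺¹`
lies in the 3-plane spanned by the initial tangent, normal and position vectors. -/
theorem stmt_3 (n : ℕ) (hn : 1 ≤ n) (E : Type*) [NormedAddCommGroup E]
    [NormedSpace ℝ E] [FiniteDimensional ℝ E]
    (H : ℝ → ℝ) (hH : Continuous H)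
    (T N y : ℝ → E) (hT : Differentiable ℝ T) (hN : Differentiable ℝ N)
    (hy : Differentiable ℝ y)
    (hT' : ∀ s : ℝ, deriv T s = (-((n : ℝ) * H s / 2)) • N s - y s)
    (hN' : ∀ s : ℝ, deriv N s = ((n : ℝ) * H s / 2) • T s)
    (hy' : ∀ s : ℝ, deriv y s = T s) :
    ∀ s : ℝ,
      T s ∈ Submodule.span ℝ ({T 0, N 0, y 0} : Set E) ∧
      N s ∈ Submodule.span ℝ ({T 0, N 0, y 0} : Set E) ∧
      y s ∈ Submodule.span ℝ ({T 0, N 0, y 0} : Set E) :=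
  stmt_3_general n E H hH T N y hT hN hy hT' hN' hy'
end

section
/- Let a, b > 0 be real numbers and C₁, C₂, C₃, C₄, C₅ ∈ ℝ⁵ constant vectors, and set Θ(t,u) = C₁ + cos(a t)·C₂ + sin(a t)·C₃ + cos(b u)·C₄ + sin(b u)·C₅. Suppose that for all (t,u) ∈ ℝ²: ⟨Θ, Θ⟩ = 1, ⟨∂ₜΘ, ∂ₜΘ⟩ = 1, ⟨∂ᵤΘ, ∂ᵤΘ⟩ = 1, and ⟨∂ₜΘ, ∂ᵤΘ⟩ = 0, where ⟨·,·⟩ is the Euclidean inner product on ℝ⁵. Then ⟨C₂,C₂⟩ = ⟨C₃,C₃⟩ = 1/a², ⟨C₄,C₄⟩ = ⟨C₅,C₅⟩ = 1/b², the vectors C₂, C₃, C₄, C₅ are pairwise orthogonal, C₁ is orthogonal to each of C₂, C₃, C₄, C₅, and ⟨C₁,C₁⟩ = 1 − 1/a² − 1/b². -/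
/-- The Euclidean inner product on `ℝ⁵`. -/
def euc5 (x y : Fin 5 → ℝ) : ℝ :=
  x 0 * y 0 + x 1 * y 1 + x 2 * y 2 + x 3 * y 3 + x 4 * y 4

/-!
Write `E v w θ = cos θ • v + sin θ • w`, so that `Θ t u = C₁ + E C₂ C₃ (a t) + E C₄ C₅ (b u)`.
Differentiation turns `E v w (a t)` into `a • E v w (a t + π/2)`, so the three conditions on the
derivatives say that `|E C₂ C₃|² ≡ 1/a²`, `|E C₄ C₅|² ≡ 1/b²` and `E C₂ C₃ θ ⊥ E C₄ C₅ φ` for all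
`θ, φ`; evaluating at `θ = 0, π/4, π/2` gives the relations among `C₂, …, C₅`. Since
`E v w (θ + π) = -E v w θ`, the condition `|Θ|² = 1` at `θ` and `θ + π` forces
`C₁ + E C₄ C₅ φ ⊥ E C₂ C₃ θ`, hence `C₁ ⊥ E C₂ C₃ θ`, and symmetrically `C₁ ⊥ E C₄ C₅ φ`;
`|C₁|²` is then read off at `θ = φ = 0`.
-/

open Real

theorem euc5_eq_dotProduct (x y : Fin 5 → ℝ) : euc5 x y = x ⬝ᵥ y := by
  simp [euc5, dotProduct, Fin.sum_univ_five]

theorem forall_of_forall_mul_add {a : ℝ} (ha : a ≠ 0) (c : ℝ) {P : ℝ → Prop}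
    (h : ∀ t, P (a * t + c)) (θ : ℝ) : P θ := by
  simpa [mul_div_cancel₀ _ ha] using h ((θ - c) / a)

section Ellipse

variable {E : Type*} [AddCommGroup E] [Module ℝ E]

noncomputable def ellipse (v w : E) (θ : ℝ) : E := cos θ • v + sin θ • w

variable (v w : E)

@[simp] theorem ellipse_zero : ellipse v w 0 = v := by simp [ellipse]

@[simp] theorem ellipse_pi_div_two : ellipse v w (π / 2) = w := by simp [ellipse]

theorem ellipse_pi_div_four : ellipse v w (π / 4) = (√2 / 2) • (v + w) := by
  simp [ellipse, smul_add]

theorem ellipse_add_pi (θ : ℝ) : ellipse v w (θ + π) = -ellipse v w θ := by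
  simp [ellipse, add_comm]

theorem ellipse_add_pi_div_two (θ : ℝ) :
    ellipse v w (θ + π / 2) = -sin θ • v + cos θ • w := by
  simp [ellipse, cos_add_pi_div_two, sin_add_pi_div_two]

end Ellipse

theorem hasDerivAt_ellipse_comp_mul {E : Type*} [NormedAddCommGroup E] [NormedSpace ℝ E]
    (v w : E) (a t : ℝ) :
    HasDerivAt (fun t => ellipse v w (a * t)) (a • ellipse v w (a * t + π / 2)) t := by
  have hc := ((hasDerivAt_id t).const_mul a).cos.smul_const v
  have hs := ((hasDerivAt_id t).const_mul a).sin.smul_const w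
  refine (hc.add hs).congr_deriv ?_
  rw [ellipse_add_pi_div_two, id]
  module

theorem deriv_ellipse_comp_mul {E : Type*} [NormedAddCommGroup E] [NormedSpace ℝ E]
    (v w : E) (a t : ℝ) :
    deriv (fun t => ellipse v w (a * t)) t = a • ellipse v w (a * t + π / 2) :=
  (hasDerivAt_ellipse_comp_mul v w a t).deriv

section DotProduct

variable {ι : Type*} [Fintype ι] {p v w : ι → ℝ}

theorem dotProduct_eq_zero_of_forall_dotProduct_ellipse (h : ∀ θ, p ⬝ᵥ ellipse v w θ = 0) :
    p ⬝ᵥ v = 0 ∧ p ⬝ᵥ w = 0 := by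
  simpa using And.intro (h 0) (h (π / 2))

theorem dotProduct_eq_zero_of_forall_ellipse_dotProduct_ellipse {x y : ι → ℝ}
    (h : ∀ θ φ, ellipse v w θ ⬝ᵥ ellipse x y φ = 0) :
    v ⬝ᵥ x = 0 ∧ v ⬝ᵥ y = 0 ∧ w ⬝ᵥ x = 0 ∧ w ⬝ᵥ y = 0 := by
  exact ⟨by simpa using h 0 0, by simpa using h 0 (π / 2), by simpa using h (π / 2) 0,
    by simpa using h (π / 2) (π / 2)⟩

theorem dotProduct_self_eq_of_forall_dotProduct_ellipse_self {c : ℝ}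
    (h : ∀ θ, ellipse v w θ ⬝ᵥ ellipse v w θ = c) :
    v ⬝ᵥ v = c ∧ w ⬝ᵥ w = c ∧ v ⬝ᵥ w = 0 := by
  have hvv : v ⬝ᵥ v = c := by simpa using h 0
  have hww : w ⬝ᵥ w = c := by simpa using h (π / 2)
  have hdiag := h (π / 4)
  rw [ellipse_pi_div_four, smul_dotProduct, dotProduct_smul, add_dotProduct, dotProduct_add,
    dotProduct_add, dotProduct_comm w v, hvv, hww] at hdiag
  have h2 : (√2 / 2) * (√2 / 2) = 1 / 2 := by
    rw [div_mul_div_comm, mul_self_sqrt zero_le_two]; norm_num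
  simp only [smul_eq_mul, ← mul_assoc, h2] at hdiag
  exact ⟨hvv, hww, by linarith⟩

theorem dotProduct_ellipse_eq_zero_of_forall_dotProduct_self_add {c : ℝ}
    (h : ∀ θ, (p + ellipse v w θ) ⬝ᵥ (p + ellipse v w θ) = c) (θ : ℝ) :
    p ⬝ᵥ ellipse v w θ = 0 := by
  have h' := (h θ).trans (h (θ + π)).symm
  simp only [ellipse_add_pi, ← sub_eq_add_neg, add_dotProduct, dotProduct_add, sub_dotProduct,
    dotProduct_sub, dotProduct_comm (ellipse v w θ) p] at h'
  linarith

theorem dotProduct_eq_zero_of_forall_dotProduct_self_add_ellipse_add_ellipse {x y : ι → ℝ}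
    {c : ℝ} (h : ∀ θ φ, (p + ellipse v w θ + ellipse x y φ) ⬝ᵥ
      (p + ellipse v w θ + ellipse x y φ) = c)
    (horth : ∀ θ φ, ellipse v w θ ⬝ᵥ ellipse x y φ = 0) :
    p ⬝ᵥ v = 0 ∧ p ⬝ᵥ w = 0 ∧ p ⬝ᵥ x = 0 ∧ p ⬝ᵥ y = 0 := by
  have hvw : ∀ θ, p ⬝ᵥ ellipse v w θ = 0 := fun θ => by
    have h' := dotProduct_ellipse_eq_zero_of_forall_dotProduct_self_add
      (fun θ => add_right_comm p (ellipse v w θ) (ellipse x y 0) ▸ h θ 0) θ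
    rwa [add_dotProduct, dotProduct_comm (ellipse x y 0), horth, add_zero] at h'
  have hxy : ∀ φ, p ⬝ᵥ ellipse x y φ = 0 := fun φ => by
    have h' := dotProduct_ellipse_eq_zero_of_forall_dotProduct_self_add (h 0) φ
    rwa [add_dotProduct, horth, add_zero] at h'
  obtain ⟨hv, hw⟩ := dotProduct_eq_zero_of_forall_dotProduct_ellipse hvw
  obtain ⟨hx, hy⟩ := dotProduct_eq_zero_of_forall_dotProduct_ellipse hxy
  exact ⟨hv, hw, hx, hy⟩

end DotProduct

/-- Normalization step in the proof of Proposition 4.1: the inner-product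
relations among the constant vectors of the flat integral surface in `S⁴`. -/
theorem stmt_5 (a b : ℝ) (ha : 0 < a) (hb : 0 < b)
    (C₁ C₂ C₃ C₄ C₅ : Fin 5 → ℝ) (Θ : ℝ → ℝ → Fin 5 → ℝ)
    (hΘ : ∀ t u : ℝ, Θ t u =
      C₁ + Real.cos (a * t) • C₂ + Real.sin (a * t) • C₃
        + Real.cos (b * u) • C₄ + Real.sin (b * u) • C₅)
    (h1 : ∀ t u : ℝ, euc5 (Θ t u) (Θ t u) = 1)
    (h2 : ∀ t u : ℝ, euc5 (deriv (fun t' => Θ t' u) t) (deriv (fun t' => Θ t' u) t) = 1)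
    (h3 : ∀ t u : ℝ, euc5 (deriv (fun u' => Θ t u') u) (deriv (fun u' => Θ t u') u) = 1)
    (h4 : ∀ t u : ℝ, euc5 (deriv (fun t' => Θ t' u) t) (deriv (fun u' => Θ t u') u) = 0) :
    euc5 C₂ C₂ = 1 / a ^ 2 ∧ euc5 C₃ C₃ = 1 / a ^ 2 ∧
    euc5 C₄ C₄ = 1 / b ^ 2 ∧ euc5 C₅ C₅ = 1 / b ^ 2 ∧
    euc5 C₂ C₃ = 0 ∧ euc5 C₂ C₄ = 0 ∧ euc5 C₂ C₅ = 0 ∧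
    euc5 C₃ C₄ = 0 ∧ euc5 C₃ C₅ = 0 ∧ euc5 C₄ C₅ = 0 ∧
    euc5 C₁ C₂ = 0 ∧ euc5 C₁ C₃ = 0 ∧ euc5 C₁ C₄ = 0 ∧ euc5 C₁ C₅ = 0 ∧
    euc5 C₁ C₁ = 1 - 1 / a ^ 2 - 1 / b ^ 2 := by
  have hΘ' : ∀ t u, Θ t u = C₁ + ellipse C₂ C₃ (a * t) + ellipse C₄ C₅ (b * u) := fun t u => by
    rw [hΘ, ellipse, ellipse]; abel
  simp only [euc5_eq_dotProduct, hΘ', deriv_add_const, deriv_const_add, deriv_ellipse_comp_mul,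
    smul_dotProduct, dotProduct_smul, smul_eq_mul] at h1 h2 h3 h4 ⊢
  have hE₁ : ∀ θ, ellipse C₂ C₃ θ ⬝ᵥ ellipse C₂ C₃ θ = 1 / a ^ 2 :=
    forall_of_forall_mul_add ha.ne' (π / 2) fun t => by
      rw [eq_div_iff (by positivity)]; linear_combination h2 t 0
  have hE₂ : ∀ φ, ellipse C₄ C₅ φ ⬝ᵥ ellipse C₄ C₅ φ = 1 / b ^ 2 :=
    forall_of_forall_mul_add hb.ne' (π / 2) fun u => by
      rw [eq_div_iff (by positivity)]; linear_combination h3 0 u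
  have hE₁E₂ : ∀ θ φ, ellipse C₂ C₃ θ ⬝ᵥ ellipse C₄ C₅ φ = 0 :=
    forall_of_forall_mul_add ha.ne' (π / 2) fun t =>
      forall_of_forall_mul_add hb.ne' (π / 2) fun u => by simpa [ha.ne', hb.ne'] using h4 t u
  have hsphere : ∀ θ φ, (C₁ + ellipse C₂ C₃ θ + ellipse C₄ C₅ φ) ⬝ᵥ
      (C₁ + ellipse C₂ C₃ θ + ellipse C₄ C₅ φ) = 1 :=
    forall_of_forall_mul_add ha.ne' 0 fun t =>
      forall_of_forall_mul_add hb.ne' 0 fun u => by simpa using h1 t u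
  obtain ⟨h22, h33, h23⟩ := dotProduct_self_eq_of_forall_dotProduct_ellipse_self hE₁
  obtain ⟨h44, h55, h45⟩ := dotProduct_self_eq_of_forall_dotProduct_ellipse_self hE₂
  obtain ⟨h24, h25, h34, h35⟩ := dotProduct_eq_zero_of_forall_ellipse_dotProduct_ellipse hE₁E₂
  obtain ⟨h12, h13, h14, h15⟩ :=
    dotProduct_eq_zero_of_forall_dotProduct_self_add_ellipse_add_ellipse hsphere hE₁E₂
  have h11 : C₁ ⬝ᵥ C₁ = 1 - 1 / a ^ 2 - 1 / b ^ 2 := by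
    have h := hsphere 0 0
    simp only [ellipse_zero, add_dotProduct, dotProduct_add, dotProduct_comm C₂ C₁,
      dotProduct_comm C₄ C₁, dotProduct_comm C₄ C₂] at h
    linear_combination h - h22 - h44 - 2 * h12 - 2 * h14 - 2 * h24
  exact ⟨h22, h33, h44, h55, h23, h24, h25, h34, h35, h45, h12, h13, h14, h15, h11⟩
end

section
/- Let A : ℝ → ℝ be twice differentiable and let s ∈ ℝ with A(s) ≠ 0. Set W(s) = (A(s) − s A'(s))² + 1 and define k₁(s) = (A''(s)s² + A'(s)W(s)s − A(s)W(s)) / W(s)^{3/2}, k₂(s) = (−A(s)² + s A'(s)A(s) − 1) / (A(s)√(W(s))), k₃(s) = (s A'(s) − A(s)) / √(W(s)). Then 3k₁(s) + k₂(s) + k₃(s) = 0 if and only if 3s²A(s)A''(s) + 5s³A(s)A'(s)³ − (15s²A(s)² + s²)A'(s)² + (15sA(s)³ + 7sA(s))A'(s) − 5A(s)⁴ − 6A(s)² − 1 = 0. -/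
/-- The penultimate Proposition of the paper: for the principal curvatures of
the hypersurface (4.9), the biconservativity condition `3k₁ + k₂ + k₃ = 0` is
equivalent to the stated second-order ODE for the profile function `A`. -/
theorem stmt_18 (A : ℝ → ℝ) (hA : Differentiable ℝ A)
    (hA' : Differentiable ℝ (deriv A)) (s : ℝ) (hAs : A s ≠ 0)
    (W k₁ k₂ k₃ : ℝ)
    (hW : W = (A s - s * deriv A s) ^ 2 + 1)
    (hk₁ : k₁ = (deriv (deriv A) s * s ^ 2 + deriv A s * W * s - A s * W)
      / W ^ ((3 : ℝ) / 2))
    (hk₂ : k₂ = (-(A s) ^ 2 + s * deriv A s * A s - 1) / (A s * Real.sqrt W))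
    (hk₃ : k₃ = (s * deriv A s - A s) / Real.sqrt W) :
    3 * k₁ + k₂ + k₃ = 0 ↔
      3 * s ^ 2 * A s * deriv (deriv A) s + 5 * s ^ 3 * A s * (deriv A s) ^ 3
        - (15 * s ^ 2 * (A s) ^ 2 + s ^ 2) * (deriv A s) ^ 2
        + (15 * s * (A s) ^ 3 + 7 * s * A s) * deriv A s
        - 5 * (A s) ^ 4 - 6 * (A s) ^ 2 - 1 = 0 := by
  have hWpos : 0 < W := by rw [hW]; positivity
  have hsq : 0 < Real.sqrt W := Real.sqrt_pos.mpr hWpos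
  have hrpow : W ^ ((3 : ℝ) / 2) = W * Real.sqrt W := by
    rw [show ((3 : ℝ) / 2) = (1 : ℝ) + 1 / 2 by norm_num,
      Real.rpow_add hWpos, Real.rpow_one, ← Real.sqrt_eq_rpow]
  have heq : 3 * k₁ + k₂ + k₃ =
      (3 * s ^ 2 * A s * deriv (deriv A) s + 5 * s ^ 3 * A s * (deriv A s) ^ 3
        - (15 * s ^ 2 * (A s) ^ 2 + s ^ 2) * (deriv A s) ^ 2
        + (15 * s * (A s) ^ 3 + 7 * s * A s) * deriv A s
        - 5 * (A s) ^ 4 - 6 * (A s) ^ 2 - 1) / (A s * W * Real.sqrt W) := by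
    rw [hk₁, hk₂, hk₃, hrpow]
    field_simp
    rw [hW]
    ring
  rw [heq, div_eq_zero_iff]
  have hd : A s * W * Real.sqrt W ≠ 0 := by positivity
  simp [hd]
end

section
/- Let A : ℝ → ℝ be twice differentiable and let s ∈ ℝ. Set W(s) = (A(s) − s A'(s))² + 1 and define k₁(s) = (A''(s)s² + A'(s)W(s)s − A(s)W(s)) / W(s)^{3/2} and k₂(s) = (s A'(s) − A(s)) / √(W(s)). Then 3k₁(s) + 2k₂(s) = 0 if and only if 3s²A''(s) + 5s³A'(s)³ − 15s²A(s)A'(s)² + (15sA(s)² + 5s)A'(s) − 5A(s)³ − 5A(s) = 0. -/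
/-!
Both curvatures share the positive denominator `W ^ (3 / 2) = W * √W`, so `3 k₁ + 2 k₂`
vanishes exactly when its numerator `3 (A'' s² + A' W s - A W) + 2 (s A' - A) W` does;
expanding `W = (A - s A')² + 1` turns that numerator into the left side of the ODE.
-/

namespace Real

theorem rpow_three_halves_eq_mul_sqrt {x : ℝ} (hx : 0 < x) :
    x ^ ((3 : ℝ) / 2) = x * √x := by
  rw [sqrt_eq_rpow, show (3 : ℝ) / 2 = 1 + 1 / 2 by norm_num, rpow_add hx, rpow_one]

theorem mul_div_rpow_three_halves_add_mul_div_sqrt_eq_zero_iff {W : ℝ} (hW : 0 < W)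
    (p q a b : ℝ) :
    p * (a / W ^ ((3 : ℝ) / 2)) + q * (b / √W) = 0 ↔ p * a + q * b * W = 0 := by
  have hsqrt : 0 < √W := sqrt_pos.mpr hW
  have hcommon :
      p * (a / W ^ ((3 : ℝ) / 2)) + q * (b / √W) = (p * a + q * b * W) / (W * √W) := by
    rw [rpow_three_halves_eq_mul_sqrt hW]
    field_simp
  rw [hcommon, div_eq_zero_iff, or_iff_left (mul_pos hW hsqrt).ne']

end Real

theorem stmt_19_general (A : ℝ → ℝ) (s : ℝ)
    (W k₁ k₂ : ℝ)
    (hW : W = (A s - s * deriv A s) ^ 2 + 1)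
    (hk₁ : k₁ = (deriv (deriv A) s * s ^ 2 + deriv A s * W * s - A s * W)
      / W ^ ((3 : ℝ) / 2))
    (hk₂ : k₂ = (s * deriv A s - A s) / Real.sqrt W) :
    3 * k₁ + 2 * k₂ = 0 ↔
      3 * s ^ 2 * deriv (deriv A) s + 5 * s ^ 3 * (deriv A s) ^ 3
        - 15 * s ^ 2 * A s * (deriv A s) ^ 2
        + (15 * s * (A s) ^ 2 + 5 * s) * deriv A s
        - 5 * (A s) ^ 3 - 5 * A s = 0 := by
  have hWpos : 0 < W := by rw [hW]; positivity
  rw [hk₁, hk₂, Real.mul_div_rpow_three_halves_add_mul_div_sqrt_eq_zero_iff hWpos, hW]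
  ring_nf

/-- The final Proposition of the paper: for the principal curvatures of the
hypersurface (4.10), the biconservativity condition `3k₁ + 2k₂ = 0` is
equivalent to the stated second-order ODE for the profile function `A`. -/
theorem stmt_19 (A : ℝ → ℝ) (hA : Differentiable ℝ A)
    (hA' : Differentiable ℝ (deriv A)) (s : ℝ)
    (W k₁ k₂ : ℝ)
    (hW : W = (A s - s * deriv A s) ^ 2 + 1)
    (hk₁ : k₁ = (deriv (deriv A) s * s ^ 2 + deriv A s * W * s - A s * W)
      / W ^ ((3 : ℝ) / 2))
    (hk₂ : k₂ = (s * deriv A s - A s) / Real.sqrt W) :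
    3 * k₁ + 2 * k₂ = 0 ↔
      3 * s ^ 2 * deriv (deriv A) s + 5 * s ^ 3 * (deriv A s) ^ 3
        - 15 * s ^ 2 * A s * (deriv A s) ^ 2
        + (15 * s * (A s) ^ 2 + 5 * s) * deriv A s
        - 5 * (A s) ^ 3 - 5 * A s = 0 :=
  stmt_19_general A s W k₁ k₂ hW hk₁ hk₂
end
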